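/- Let (v,u,S) be a C² solution of the non-isentropic compressible Euler equations in Lagrangian coordinates on (0,T)×ℝ. Set k₁ = ((γ+1)K_c/(2(γ−1))) a^{2/(γ−1)} and k₂ = ((γ−1)/(γ(γ+1))) a Ŝ_x. Then at every point of (0,T)×ℝ the Riccati-type equations ∂₊ξ = k₁( k₂(3ξ + ζ) + ξζ − ξ² ) and ∂₋ζ = k₁( −k₂(ξ + 3ζ) + ξζ − ζ² ) hold. -/

import Mathlib

/- STATEMENT 1: For a C² solution of the non-isentropic compressible Euler equations
on (0,T)×ℝ, with k₁ = ((γ+1)K_c/(2(γ−1))) a^{2/(γ−1)} and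
k₂ = ((γ−1)/(γ(γ+1))) a Ŝ_x, the Riccati equations
∂₊ξ = k₁(k₂(3ξ+ζ) + ξζ − ξ²) and ∂₋ζ = k₁(−k₂(ξ+3ζ) + ξζ − ζ²) hold. -/

noncomputable section
open Real Set

def pt (f : ℝ → ℝ → ℝ) (t x : ℝ) : ℝ := deriv (fun τ => f τ x) t

def px (f : ℝ → ℝ → ℝ) (t x : ℝ) : ℝ := deriv (fun y => f t y) x

def IsC2On (f : ℝ → ℝ → ℝ) (D : Set (ℝ × ℝ)) : Prop :=
  ContDiffOn ℝ 2 (fun q : ℝ × ℝ => f q.1 q.2) D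

def hatSF (c_v : ℝ) (S : ℝ → ℝ → ℝ) (t x : ℝ) : ℝ := Real.exp (S t x / (2 * c_v))

def aE (K γ : ℝ) (v : ℝ → ℝ → ℝ) (t x : ℝ) : ℝ :=
  2 * Real.sqrt (K * γ) / (γ - 1) * v t x ^ (-(γ - 1) / 2)

def cE (K c_v γ : ℝ) (v S : ℝ → ℝ → ℝ) (t x : ℝ) : ℝ :=
  Real.sqrt (K * γ) * v t x ^ (-(γ + 1) / 2) * hatSF c_v S t x

def pE (K c_v γ : ℝ) (v S : ℝ → ℝ → ℝ) (t x : ℝ) : ℝ :=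
  K * Real.exp (S t x / c_v) * v t x ^ (-γ)

def sE (K c_v γ : ℝ) (v u S : ℝ → ℝ → ℝ) (t x : ℝ) : ℝ :=
  u t x + hatSF c_v S t x * aE K γ v t x

def rE (K c_v γ : ℝ) (v u S : ℝ → ℝ → ℝ) (t x : ℝ) : ℝ :=
  u t x - hatSF c_v S t x * aE K γ v t x

def xiE (K c_v γ : ℝ) (v u S : ℝ → ℝ → ℝ) (t x : ℝ) : ℝ :=
  px (sE K c_v γ v u S) t x - (1 / γ) * px (hatSF c_v S) t x * aE K γ v t x

def zetaE (K c_v γ : ℝ) (v u S : ℝ → ℝ → ℝ) (t x : ℝ) : ℝ :=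
  px (rE K c_v γ v u S) t x + (1 / γ) * px (hatSF c_v S) t x * aE K γ v t x

def EulerSys (K c_v γ : ℝ) (v u S : ℝ → ℝ → ℝ) (D : Set (ℝ × ℝ)) : Prop :=
  ∀ t x, (t, x) ∈ D →
    0 < v t x ∧
    pt v t x - px u t x = 0 ∧
    pt u t x + px (pE K c_v γ v S) t x = 0 ∧
    pt S t x = 0

/-- `K_v = (2√(Kγ)/(γ−1))^{2/(γ−1)}`. -/
def KvC (K γ : ℝ) : ℝ := (2 * Real.sqrt (K * γ) / (γ - 1)) ^ (2 / (γ - 1))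

/-- `K_c = √(Kγ) K_v^{−(γ+1)/2}`. -/
def KcC (K γ : ℝ) : ℝ := Real.sqrt (K * γ) * KvC K γ ^ (-(γ + 1) / 2)

/-- `k₁ = ((γ+1)K_c/(2(γ−1))) a^{2/(γ−1)}`. -/
def k1E (K c_v γ : ℝ) (v : ℝ → ℝ → ℝ) (t x : ℝ) : ℝ :=
  (γ + 1) * KcC K γ / (2 * (γ - 1)) * aE K γ v t x ^ (2 / (γ - 1))

/-- `k₂ = ((γ−1)/(γ(γ+1))) a Ŝ_x`. -/
def k2E (K c_v γ : ℝ) (v S : ℝ → ℝ → ℝ) (t x : ℝ) : ℝ :=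
  (γ - 1) / (γ * (γ + 1)) * aE K γ v t x * px (hatSF c_v S) t x

/-!
Write `m = Ŝ`. Then `m_t = 0`, and `c = (γ-1) a m / (2v)`, `p = (γ-1)² m² a² / (4γ v)`,
`k₁ = (γ+1) / (4v)`. In these terms the equations for `v` and `u` say exactly `s_t = -c ξ`
and `r_t = c ζ`. Differentiating `s_t = -c ξ` in `x` and swapping the mixed partials of `s`
(with `m_{xt} = 0`) gives `∂₊ξ = -c_x ξ - (1/γ) m_x a_t`; the same argument with `-c` in
place of `c` gives `∂₋ζ = c_x ζ + (1/γ) m_x a_t`. Once `c_x` and `a_t` are written out, the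
Riccati form is a rational identity in `u_x, v_x, m_x`.
-/

open Function Filter Topology

theorem ContDiffOn.differentiableAt_of_isOpen {E F : Type*} [NormedAddCommGroup E]
    [NormedSpace ℝ E] [NormedAddCommGroup F] [NormedSpace ℝ F] {φ : E → F} {s : Set E}
    {n : WithTop ℕ∞} {z : E} (h : ContDiffOn ℝ n φ s) (hn : n ≠ 0) (hs : IsOpen s)
    (hz : z ∈ s) : DifferentiableAt ℝ φ z :=
  (h.contDiffAt (hs.mem_nhds hz)).differentiableAt hn

lemma deriv_const_mul_rpow {φ : ℝ → ℝ} {A e y : ℝ} (hφ : DifferentiableAt ℝ φ y)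
    (hy : φ y ≠ 0) :
    deriv (fun y => A * φ y ^ e) y = e * (A * φ y ^ e) * deriv φ y / φ y := by
  rw [((hφ.hasDerivAt.rpow_const (Or.inl hy)).const_mul A).deriv, Real.rpow_sub_one hy]
  field_simp

section PartialDerivatives

variable {f g : ℝ → ℝ → ℝ} {D : Set (ℝ × ℝ)} {t x : ℝ}

lemma hasDerivAt_px_of_hasFDerivAt {L : ℝ × ℝ →L[ℝ] ℝ}
    (h : HasFDerivAt (uncurry f) L (t, x)) : HasDerivAt (f t ·) (L (0, 1)) x :=
  h.comp_hasDerivAt x ((hasDerivAt_const x t).prodMk (hasDerivAt_id x))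

lemma hasDerivAt_pt_of_hasFDerivAt {L : ℝ × ℝ →L[ℝ] ℝ}
    (h : HasFDerivAt (uncurry f) L (t, x)) : HasDerivAt (f · x) (L (1, 0)) t :=
  h.comp_hasDerivAt (f := fun τ => (τ, x)) t ((hasDerivAt_id' t).prodMk (hasDerivAt_const t x))

lemma px_eq_fderiv (h : DifferentiableAt ℝ (uncurry f) (t, x)) :
    px f t x = fderiv ℝ (uncurry f) (t, x) (0, 1) :=
  (hasDerivAt_px_of_hasFDerivAt h.hasFDerivAt).deriv

lemma pt_eq_fderiv (h : DifferentiableAt ℝ (uncurry f) (t, x)) :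
    pt f t x = fderiv ℝ (uncurry f) (t, x) (1, 0) :=
  (hasDerivAt_pt_of_hasFDerivAt h.hasFDerivAt).deriv

lemma px_congr (h : uncurry f =ᶠ[𝓝 (t, x)] uncurry g) : px f t x = px g t x :=
  (h.comp_tendsto ((continuous_const.prodMk continuous_id).tendsto' x (t, x) rfl)).deriv_eq

lemma pt_congr (h : uncurry f =ᶠ[𝓝 (t, x)] uncurry g) : pt f t x = pt g t x :=
  (h.comp_tendsto ((continuous_id.prodMk continuous_const).tendsto' t (t, x) rfl)).deriv_eq

lemma eventuallyEq_of_eqOn (hD : IsOpen D) (hfg : ∀ s y, (s, y) ∈ D → f s y = g s y)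
    (hq : (t, x) ∈ D) : uncurry f =ᶠ[𝓝 (t, x)] uncurry g :=
  eventually_of_mem (hD.mem_nhds hq) fun q hq => hfg q.1 q.2 hq

lemma px_eq_of_hasDerivAt_of_eqOn (hD : IsOpen D) (hfg : ∀ s y, (s, y) ∈ D → f s y = g s y)
    (hq : (t, x) ∈ D) {g' : ℝ} (hg : HasDerivAt (g t ·) g' x) : px f t x = g' :=
  (px_congr (eventuallyEq_of_eqOn hD hfg hq)).trans hg.deriv

lemma px_neg : px (fun t x => -f t x) t x = -px f t x := deriv.fun_neg

lemma hasDerivAt_px {n : WithTop ℕ∞} (hf : ContDiffOn ℝ n (uncurry f) D) (hn : n ≠ 0)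
    (hD : IsOpen D) (hq : (t, x) ∈ D) : HasDerivAt (f t ·) (px f t x) x :=
  (hasDerivAt_px_of_hasFDerivAt (hf.differentiableAt_of_isOpen hn hD hq).hasFDerivAt)
    |>.differentiableAt.hasDerivAt

lemma hasDerivAt_pt {n : WithTop ℕ∞} (hf : ContDiffOn ℝ n (uncurry f) D) (hn : n ≠ 0)
    (hD : IsOpen D) (hq : (t, x) ∈ D) : HasDerivAt (f · x) (pt f t x) t :=
  (hasDerivAt_pt_of_hasFDerivAt (hf.differentiableAt_of_isOpen hn hD hq).hasFDerivAt)
    |>.differentiableAt.hasDerivAt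

lemma contDiffOn_px {m n : WithTop ℕ∞} (hf : ContDiffOn ℝ n (uncurry f) D) (hD : IsOpen D)
    (hmn : m + 1 ≤ n) : ContDiffOn ℝ m (uncurry (px f)) D := by
  refine ((hf.fderiv_of_isOpen hD hmn).clm_apply
    (contDiffOn_const (c := ((0 : ℝ), (1 : ℝ))))).congr fun q hq => ?_
  exact px_eq_fderiv (hf.differentiableAt_of_isOpen
    (ne_of_gt (lt_of_lt_of_le (by simp) hmn)) hD hq)

lemma px_pt_eq_pt_px (hf : IsC2On f D) (hD : IsOpen D) (hq : (t, x) ∈ D) :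
    px (pt f) t x = pt (px f) t x := by
  have hf2 : ContDiffAt ℝ 2 (uncurry f) (t, x) := hf.contDiffAt (hD.mem_nhds hq)
  have hf' : DifferentiableAt ℝ (fderiv ℝ (uncurry f)) (t, x) :=
    (hf2.fderiv_right (m := 1) le_rfl).differentiableAt one_ne_zero
  have hdiff (w : ℝ × ℝ) :
      DifferentiableAt ℝ (uncurry (curry fun q => fderiv ℝ (uncurry f) q w)) (t, x) :=
    hf'.clm_apply (differentiableAt_const w)
  have hpt : uncurry (pt f) =ᶠ[𝓝 (t, x)]
      uncurry (curry fun q => fderiv ℝ (uncurry f) q (1, 0)) :=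
    eventuallyEq_of_eqOn hD (fun _ _ hq =>
      pt_eq_fderiv (hf.differentiableAt_of_isOpen two_ne_zero hD hq)) hq
  have hpx : uncurry (px f) =ᶠ[𝓝 (t, x)]
      uncurry (curry fun q => fderiv ℝ (uncurry f) q (0, 1)) :=
    eventuallyEq_of_eqOn hD (fun _ _ hq =>
      px_eq_fderiv (hf.differentiableAt_of_isOpen two_ne_zero hD hq)) hq
  rw [px_congr hpt, pt_congr hpx, px_eq_fderiv (hdiff _), pt_eq_fderiv (hdiff _),
    uncurry_curry, uncurry_curry, fderiv_clm_apply hf' (differentiableAt_const _),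
    fderiv_clm_apply hf' (differentiableAt_const _)]
  simpa using hf2.isSymmSndFDerivAt (by simp) (0, 1) (1, 0)

lemma pt_const_mul_px_mul_of_pt_eq_zero {a : ℝ → ℝ → ℝ} (k : ℝ) (hD : IsOpen D)
    (hf : IsC2On f D) (hf0 : ∀ s y, (s, y) ∈ D → pt f s y = 0)
    (ha : ContDiffOn ℝ 1 (uncurry a) D) (hq : (t, x) ∈ D) :
    pt (fun t x => k * px f t x * a t x) t x = k * px f t x * pt a t x := by
  have hfxt : pt (px f) t x = 0 := by
    rw [← px_pt_eq_pt_px hf hD hq, px_congr (eventuallyEq_of_eqOn (g := fun _ _ => 0) hD hf0 hq)]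
    exact deriv_const _ _
  have hfx := hasDerivAt_pt (contDiffOn_px hf hD (by norm_num)) one_ne_zero hD hq
  rw [pt, ((hfx.const_mul k).fun_mul (hasDerivAt_pt ha one_ne_zero hD hq)).deriv, hfxt]
  ring

end PartialDerivatives

/-- `charDeriv c` is `∂₊ = ∂_t + c ∂_x`, and `charDeriv (-c)` is `∂₋`. -/
def charDeriv (c f : ℝ → ℝ → ℝ) (t x : ℝ) : ℝ := pt f t x + c t x * px f t x

lemma charDeriv_eq_of_pt_eq {f g c ξ : ℝ → ℝ → ℝ} {D : Set (ℝ × ℝ)} {t x : ℝ}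
    (hD : IsOpen D) (hf : IsC2On f D) (hg : ContDiffOn ℝ 1 (uncurry g) D)
    (hc : ContDiffOn ℝ 1 (uncurry c) D)
    (hξ : ∀ s y, (s, y) ∈ D → ξ s y = px f s y - g s y)
    (hft : ∀ s y, (s, y) ∈ D → pt f s y = -c s y * ξ s y) (hq : (t, x) ∈ D) :
    charDeriv c ξ t x = -px c t x * ξ t x - pt g t x := by
  have hfx : ContDiffOn ℝ 1 (uncurry (px f)) D := contDiffOn_px hf hD (by norm_num)
  have hξ' : ContDiffOn ℝ 1 (uncurry ξ) D := (hfx.sub hg).congr fun q hq => hξ q.1 q.2 hq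
  have hξt : pt ξ t x = pt (px f) t x - pt g t x := by
    rw [pt_congr (eventuallyEq_of_eqOn (g := fun t x => px f t x - g t x) hD hξ hq)]
    exact ((hasDerivAt_pt hfx one_ne_zero hD hq).sub (hasDerivAt_pt hg one_ne_zero hD hq)).deriv
  have hftx : px (pt f) t x = -px c t x * ξ t x + -c t x * px ξ t x := by
    rw [px_congr (eventuallyEq_of_eqOn (g := fun t x => -c t x * ξ t x) hD hft hq)]
    exact ((hasDerivAt_px hc one_ne_zero hD hq).neg.mul
      (hasDerivAt_px hξ' one_ne_zero hD hq)).deriv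
  rw [charDeriv, hξt, ← px_pt_eq_pt_px hf hD hq, hftx]
  ring

section PointwiseIdentities

variable {K c_v γ : ℝ} {v S : ℝ → ℝ → ℝ} {t x : ℝ}

lemma KcC_mul_KvC (hK : 0 < K) (hγ : 1 < γ) : KcC K γ * KvC K γ = (γ - 1) / 2 := by
  have hγ1 : γ - 1 ≠ 0 := by linarith
  have hA : 0 < 2 * √(K * γ) / (γ - 1) := by
    have : 0 < √(K * γ) := Real.sqrt_pos.mpr (by nlinarith)
    have : 0 < γ - 1 := by linarith
    positivity
  rw [KcC, KvC, ← Real.rpow_mul hA.le, mul_assoc, ← Real.rpow_add hA,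
    show 2 / (γ - 1) * (-(γ + 1) / 2) + 2 / (γ - 1) = -1 by field_simp; ring, Real.rpow_neg_one]
  field_simp

lemma cE_eq (hγ : γ ≠ 1) (hv : 0 < v t x) :
    cE K c_v γ v S t x = (γ - 1) / 2 * aE K γ v t x * hatSF c_v S t x / v t x := by
  have hγ1 : γ - 1 ≠ 0 := sub_ne_zero.mpr hγ
  rw [cE, aE, show -(γ + 1) / 2 = -(γ - 1) / 2 - 1 by ring, Real.rpow_sub_one hv.ne']
  field_simp

lemma pE_eq (hK : 0 ≤ K) (hγ : 1 < γ) (hv : 0 < v t x) :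
    pE K c_v γ v S t x
      = (γ - 1) ^ 2 / (4 * γ) * hatSF c_v S t x ^ 2 * aE K γ v t x ^ 2 / v t x := by
  have hγ1 : γ - 1 ≠ 0 := by linarith
  have hγ0 : γ ≠ 0 := by linarith
  have hexp : hatSF c_v S t x ^ 2 = Real.exp (S t x / c_v) := by
    rw [hatSF, ← Real.exp_nat_mul]; ring_nf
  have hpow : (v t x ^ (-(γ - 1) / 2)) ^ 2 = v t x ^ (-γ) * v t x := by
    rw [← Real.rpow_natCast, ← Real.rpow_mul hv.le, ← Real.rpow_add_one hv.ne']
    ring_nf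
  rw [pE, aE, hexp, mul_pow, hpow, div_pow, mul_pow, Real.sq_sqrt (by nlinarith)]
  field_simp
  ring

lemma k1E_eq (hK : 0 < K) (hγ : 1 < γ) (hv : 0 < v t x) :
    k1E K c_v γ v t x = (γ + 1) / (4 * v t x) := by
  have hγ1 : γ - 1 ≠ 0 := by linarith
  have hA : 0 ≤ 2 * √(K * γ) / (γ - 1) := div_nonneg (by positivity) (by linarith)
  have ha : aE K γ v t x ^ (2 / (γ - 1)) = KvC K γ / v t x := by
    rw [aE, Real.mul_rpow hA (Real.rpow_nonneg hv.le _), ← Real.rpow_mul hv.le,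
      show -(γ - 1) / 2 * (2 / (γ - 1)) = -1 by field_simp, Real.rpow_neg_one, KvC,
      ← div_eq_mul_inv]
  rw [k1E, ha, show (γ + 1) * KcC K γ / (2 * (γ - 1)) * (KvC K γ / v t x)
      = (γ + 1) * (KcC K γ * KvC K γ) / (2 * (γ - 1) * v t x) by field_simp, KcC_mul_KvC hK hγ]
  field_simp
  ring

end PointwiseIdentities

structure IsC2Solution (K c_v γ : ℝ) (v u S : ℝ → ℝ → ℝ) (D : Set (ℝ × ℝ)) :
    Prop where
  isOpen : IsOpen D
  c2_v : IsC2On v D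
  c2_u : IsC2On u D
  c2_S : IsC2On S D
  euler : EulerSys K c_v γ v u S D

namespace IsC2Solution

variable {K c_v γ : ℝ} {v u S : ℝ → ℝ → ℝ} {D : Set (ℝ × ℝ)} {t x : ℝ}

lemma v_pos (h : IsC2Solution K c_v γ v u S D) (hq : (t, x) ∈ D) : 0 < v t x :=
  (h.euler t x hq).1

lemma pt_v (h : IsC2Solution K c_v γ v u S D) (hq : (t, x) ∈ D) : pt v t x = px u t x :=
  sub_eq_zero.mp (h.euler t x hq).2.1

lemma pt_u (h : IsC2Solution K c_v γ v u S D) (hq : (t, x) ∈ D) :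
    pt u t x = -px (pE K c_v γ v S) t x :=
  eq_neg_of_add_eq_zero_left (h.euler t x hq).2.2.1

lemma c2_hatSF (h : IsC2Solution K c_v γ v u S D) : IsC2On (hatSF c_v S) D :=
  (h.c2_S.div_const _).exp

lemma c2_aE (h : IsC2Solution K c_v γ v u S D) : IsC2On (aE K γ v) D :=
  contDiffOn_const.mul (h.c2_v.rpow_const_of_ne fun _ hq => (h.v_pos hq).ne')

lemma c2_cE (h : IsC2Solution K c_v γ v u S D) : IsC2On (cE K c_v γ v S) D :=
  (contDiffOn_const.mul (h.c2_v.rpow_const_of_ne fun _ hq => (h.v_pos hq).ne')).mul h.c2_hatSF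

lemma c2_sE (h : IsC2Solution K c_v γ v u S D) : IsC2On (sE K c_v γ v u S) D :=
  h.c2_u.add (h.c2_hatSF.mul h.c2_aE)

lemma c2_rE (h : IsC2Solution K c_v γ v u S D) : IsC2On (rE K c_v γ v u S) D :=
  h.c2_u.sub (h.c2_hatSF.mul h.c2_aE)

lemma contDiffOn_const_mul_px_hatSF_mul_aE (h : IsC2Solution K c_v γ v u S D) (k : ℝ) :
    ContDiffOn ℝ 1 (uncurry fun t x => k * px (hatSF c_v S) t x * aE K γ v t x) D :=
  (contDiffOn_const.mul (contDiffOn_px (f := hatSF c_v S) h.c2_hatSF h.isOpen (by norm_num))).mul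
    (h.c2_aE.of_le (by norm_num))

lemma pt_hatSF (h : IsC2Solution K c_v γ v u S D) (hq : (t, x) ∈ D) :
    pt (hatSF c_v S) t x = 0 := by
  have hS := hasDerivAt_pt h.c2_S two_ne_zero h.isOpen hq
  rw [pt, (show HasDerivAt (hatSF c_v S · x) _ t from (hS.div_const _).exp).deriv,
    (h.euler t x hq).2.2.2]
  simp

lemma px_aE (h : IsC2Solution K c_v γ v u S D) (hq : (t, x) ∈ D) :
    px (aE K γ v) t x = -(γ - 1) / 2 * aE K γ v t x * px v t x / v t x :=
  deriv_const_mul_rpow (hasDerivAt_px h.c2_v two_ne_zero h.isOpen hq).differentiableAt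
    (h.v_pos hq).ne'

lemma pt_aE (h : IsC2Solution K c_v γ v u S D) (hq : (t, x) ∈ D) :
    pt (aE K γ v) t x = -(γ - 1) / 2 * aE K γ v t x * px u t x / v t x := by
  rw [← h.pt_v hq]
  exact deriv_const_mul_rpow (hasDerivAt_pt h.c2_v two_ne_zero h.isOpen hq).differentiableAt
    (h.v_pos hq).ne'

lemma xiE_eq (h : IsC2Solution K c_v γ v u S D) (hq : (t, x) ∈ D) :
    xiE K c_v γ v u S t x = px u t x + (1 - 1 / γ) * px (hatSF c_v S) t x * aE K γ v t x
      + hatSF c_v S t x * px (aE K γ v) t x := by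
  have hd (f : ℝ → ℝ → ℝ) (hf : IsC2On f D) := hasDerivAt_px hf two_ne_zero h.isOpen hq
  rw [xiE, px, (show HasDerivAt (sE K c_v γ v u S t ·) _ x from
    (hd _ h.c2_u).add ((hd _ h.c2_hatSF).mul (hd _ h.c2_aE))).deriv]
  ring

lemma zetaE_eq (h : IsC2Solution K c_v γ v u S D) (hq : (t, x) ∈ D) :
    zetaE K c_v γ v u S t x = px u t x - (1 - 1 / γ) * px (hatSF c_v S) t x * aE K γ v t x
      - hatSF c_v S t x * px (aE K γ v) t x := by
  have hd (f : ℝ → ℝ → ℝ) (hf : IsC2On f D) := hasDerivAt_px hf two_ne_zero h.isOpen hq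
  rw [zetaE, px, (show HasDerivAt (rE K c_v γ v u S t ·) _ x from
    (hd _ h.c2_u).sub ((hd _ h.c2_hatSF).mul (hd _ h.c2_aE))).deriv]
  ring

lemma px_pE (h : IsC2Solution K c_v γ v u S D) (hK : 0 ≤ K) (hγ : 1 < γ) (hq : (t, x) ∈ D) :
    px (pE K c_v γ v S) t x = (γ - 1) ^ 2 / (4 * γ) *
      ((2 * px (hatSF c_v S) t x * aE K γ v t x ^ 2
        + 2 * hatSF c_v S t x * aE K γ v t x * px (aE K γ v) t x) * hatSF c_v S t x * v t x
        - hatSF c_v S t x ^ 2 * aE K γ v t x ^ 2 * px v t x) / v t x ^ 2 := by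
  have hd (f : ℝ → ℝ → ℝ) (hf : IsC2On f D) := hasDerivAt_px hf two_ne_zero h.isOpen hq
  refine (px_eq_of_hasDerivAt_of_eqOn h.isOpen (fun _ _ hq => pE_eq hK hγ (h.v_pos hq)) hq
    (((((hd _ h.c2_hatSF).pow 2).const_mul _).fun_mul ((hd _ h.c2_aE).pow 2)).div (hd _ h.c2_v)
      (h.v_pos hq).ne')).trans ?_
  norm_num
  ring

lemma px_cE (h : IsC2Solution K c_v γ v u S D) (hγ : γ ≠ 1) (hq : (t, x) ∈ D) :
    px (cE K c_v γ v S) t x = (γ - 1) / 2 *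
      ((px (aE K γ v) t x * hatSF c_v S t x + aE K γ v t x * px (hatSF c_v S) t x) * v t x
        - aE K γ v t x * hatSF c_v S t x * px v t x) / v t x ^ 2 := by
  have hd (f : ℝ → ℝ → ℝ) (hf : IsC2On f D) := hasDerivAt_px hf two_ne_zero h.isOpen hq
  refine (px_eq_of_hasDerivAt_of_eqOn h.isOpen (fun _ _ hq => cE_eq hγ (h.v_pos hq)) hq
    ((((hd _ h.c2_aE).const_mul _).fun_mul (hd _ h.c2_hatSF)).div (hd _ h.c2_v)
      (h.v_pos hq).ne')).trans ?_
  ring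

lemma pt_sE (h : IsC2Solution K c_v γ v u S D) (hK : 0 ≤ K) (hγ : 1 < γ) (hq : (t, x) ∈ D) :
    pt (sE K c_v γ v u S) t x = -cE K c_v γ v S t x * xiE K c_v γ v u S t x := by
  have hd (f : ℝ → ℝ → ℝ) (hf : IsC2On f D) := hasDerivAt_pt hf two_ne_zero h.isOpen hq
  have hv := h.v_pos hq
  have hγ0 : γ ≠ 0 := by linarith
  rw [pt, (show HasDerivAt (sE K c_v γ v u S · x) _ t from
      (hd _ h.c2_u).add ((hd _ h.c2_hatSF).mul (hd _ h.c2_aE))).deriv,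
    h.pt_u hq, h.px_pE hK hγ hq, h.pt_hatSF hq, h.pt_aE hq, h.xiE_eq hq, h.px_aE hq,
    cE_eq hγ.ne' hv]
  field_simp
  ring

lemma pt_rE (h : IsC2Solution K c_v γ v u S D) (hK : 0 ≤ K) (hγ : 1 < γ) (hq : (t, x) ∈ D) :
    pt (rE K c_v γ v u S) t x = cE K c_v γ v S t x * zetaE K c_v γ v u S t x := by
  have hd (f : ℝ → ℝ → ℝ) (hf : IsC2On f D) := hasDerivAt_pt hf two_ne_zero h.isOpen hq
  have hv := h.v_pos hq
  have hγ0 : γ ≠ 0 := by linarith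
  rw [pt, (show HasDerivAt (rE K c_v γ v u S · x) _ t from
      (hd _ h.c2_u).sub ((hd _ h.c2_hatSF).mul (hd _ h.c2_aE))).deriv,
    h.pt_u hq, h.px_pE hK hγ hq, h.pt_hatSF hq, h.pt_aE hq, h.zetaE_eq hq, h.px_aE hq,
    cE_eq hγ.ne' hv]
  field_simp
  ring

theorem charDeriv_xiE (h : IsC2Solution K c_v γ v u S D) (hK : 0 < K) (hγ : 1 < γ)
    (hq : (t, x) ∈ D) :
    charDeriv (cE K c_v γ v S) (xiE K c_v γ v u S) t x
      = k1E K c_v γ v t x *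
          (k2E K c_v γ v S t x * (3 * xiE K c_v γ v u S t x + zetaE K c_v γ v u S t x)
            + xiE K c_v γ v u S t x * zetaE K c_v γ v u S t x
            - xiE K c_v γ v u S t x ^ 2) := by
  have hv := h.v_pos hq
  have hγ0 : γ ≠ 0 := by linarith
  have hγ2 : γ + 1 ≠ 0 := by linarith
  rw [charDeriv_eq_of_pt_eq (ξ := xiE K c_v γ v u S) h.isOpen h.c2_sE
      (h.contDiffOn_const_mul_px_hatSF_mul_aE (1 / γ)) (h.c2_cE.of_le (by norm_num))
      (fun _ _ _ => rfl) (fun _ _ hq => h.pt_sE hK.le hγ hq) hq,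
    pt_const_mul_px_mul_of_pt_eq_zero _ h.isOpen h.c2_hatSF (fun _ _ hq => h.pt_hatSF hq)
      (h.c2_aE.of_le (by norm_num)) hq,
    h.px_cE hγ.ne' hq, h.pt_aE hq, k1E_eq hK hγ hv, k2E, h.xiE_eq hq, h.zetaE_eq hq, h.px_aE hq]
  field_simp
  ring

theorem charDeriv_zetaE (h : IsC2Solution K c_v γ v u S D) (hK : 0 < K) (hγ : 1 < γ)
    (hq : (t, x) ∈ D) :
    charDeriv (fun t x => -cE K c_v γ v S t x) (zetaE K c_v γ v u S) t x
      = k1E K c_v γ v t x *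
          (-k2E K c_v γ v S t x * (xiE K c_v γ v u S t x + 3 * zetaE K c_v γ v u S t x)
            + xiE K c_v γ v u S t x * zetaE K c_v γ v u S t x
            - zetaE K c_v γ v u S t x ^ 2) := by
  have hv := h.v_pos hq
  have hγ0 : γ ≠ 0 := by linarith
  have hγ2 : γ + 1 ≠ 0 := by linarith
  rw [charDeriv_eq_of_pt_eq h.isOpen h.c2_rE
      (h.contDiffOn_const_mul_px_hatSF_mul_aE (-(1 / γ))) (h.c2_cE.neg.of_le (by norm_num))
      (fun _ _ _ => by rw [zetaE]; ring) (fun _ _ hq => by rw [h.pt_rE hK.le hγ hq]; ring) hq,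
    pt_const_mul_px_mul_of_pt_eq_zero _ h.isOpen h.c2_hatSF (fun _ _ hq => h.pt_hatSF hq)
      (h.c2_aE.of_le (by norm_num)) hq, px_neg,
    h.px_cE hγ.ne' hq, h.pt_aE hq, k1E_eq hK hγ hv, k2E, h.xiE_eq hq, h.zetaE_eq hq, h.px_aE hq]
  field_simp
  ring

end IsC2Solution

theorem statement1_general (K c_v γ T : ℝ) (hK : 0 < K) (hγ : 1 < γ)
    (v u S : ℝ → ℝ → ℝ)
    (hv : IsC2On v (Ioo 0 T ×ˢ univ)) (hu : IsC2On u (Ioo 0 T ×ˢ univ))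
    (hS : IsC2On S (Ioo 0 T ×ˢ univ))
    (hsys : EulerSys K c_v γ v u S (Ioo 0 T ×ˢ univ)) :
    ∀ t x, (t, x) ∈ (Ioo 0 T ×ˢ univ : Set (ℝ × ℝ)) →
      pt (xiE K c_v γ v u S) t x + cE K c_v γ v S t x * px (xiE K c_v γ v u S) t x
        = k1E K c_v γ v t x *
            (k2E K c_v γ v S t x * (3 * xiE K c_v γ v u S t x + zetaE K c_v γ v u S t x)
              + xiE K c_v γ v u S t x * zetaE K c_v γ v u S t x
              - (xiE K c_v γ v u S t x) ^ 2) ∧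
      pt (zetaE K c_v γ v u S) t x - cE K c_v γ v S t x * px (zetaE K c_v γ v u S) t x
        = k1E K c_v γ v t x *
            (-(k2E K c_v γ v S t x) * (xiE K c_v γ v u S t x + 3 * zetaE K c_v γ v u S t x)
              + xiE K c_v γ v u S t x * zetaE K c_v γ v u S t x
              - (zetaE K c_v γ v u S t x) ^ 2) := by
  intro t x hq
  have h : IsC2Solution K c_v γ v u S (Ioo 0 T ×ˢ univ) :=
    ⟨isOpen_Ioo.prod isOpen_univ, hv, hu, hS, hsys⟩
  refine ⟨h.charDeriv_xiE hK hγ hq, ?_⟩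
  rw [← h.charDeriv_zetaE hK hγ hq, charDeriv]
  ring

theorem statement1 (K c_v γ T : ℝ) (hK : 0 < K) (hcv : 0 < c_v) (hγ : 1 < γ)
    (hT : 0 < T) (v u S : ℝ → ℝ → ℝ)
    (hv : IsC2On v (Ioo 0 T ×ˢ univ)) (hu : IsC2On u (Ioo 0 T ×ˢ univ))
    (hS : IsC2On S (Ioo 0 T ×ˢ univ))
    (hsys : EulerSys K c_v γ v u S (Ioo 0 T ×ˢ univ)) :
    ∀ t x, (t, x) ∈ (Ioo 0 T ×ˢ univ : Set (ℝ × ℝ)) →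
      pt (xiE K c_v γ v u S) t x + cE K c_v γ v S t x * px (xiE K c_v γ v u S) t x
        = k1E K c_v γ v t x *
            (k2E K c_v γ v S t x * (3 * xiE K c_v γ v u S t x + zetaE K c_v γ v u S t x)
              + xiE K c_v γ v u S t x * zetaE K c_v γ v u S t x
              - (xiE K c_v γ v u S t x) ^ 2) ∧
      pt (zetaE K c_v γ v u S) t x - cE K c_v γ v S t x * px (zetaE K c_v γ v u S) t x
        = k1E K c_v γ v t x *
            (-(k2E K c_v γ v S t x) * (xiE K c_v γ v u S t x + 3 * zetaE K c_v γ v u S t x)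
              + xiE K c_v γ v u S t x * zetaE K c_v γ v u S t x
              - (zetaE K c_v γ v u S t x) ^ 2) :=
  statement1_general K c_v γ T hK hγ v u S hv hu hS hsys
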